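/- arXiv:2603.18039 — 3 statements merged into one kernel-verified Lean document; each statement's English description precedes it below -/
import Mathlib

section
/- Let d_in, d ≥ 1, α ∈ (0,1), T ≥ 1. Let A be a linear map from ℝ^{d_in} to ℝ^d with operator norm ‖A‖₂ ≤ M_A, let b, θ ∈ ℝ^d with ‖θ‖_∞ ≤ M_θ, and let σ : ℝ → ℝ be differentiable with sup_x |σ′(x)| ≤ B₁; assume γ := α + M_θ B₁ < 1. Given an input sequence x_{1:T} in ℝ^{d_in}, define u_0 = 0 and, for 1 ≤ t ≤ T, u_t = α u_{t-1} + A x_t + b - diag(θ)·σ(u_{t-1} - θ) and z_t = σ(u_t - θ), with σ applied coordinatewise. Then the layer map x_{1:T} ↦ z_{1:T} is Lipschitz with constant B₁ M_A S_T(γ) with respect to the sequence norm ‖v_{1:T}‖_{2,2} := (∑_{t=1}^T ‖v_t‖₂²)^{1/2}: for any two input sequences x_{1:T}, x′_{1:T}, (∑_{t=1}^T ‖z_t - z′_t‖₂²)^{1/2} ≤ B₁ M_A S_T(γ) · (∑_{t=1}^T ‖x_t - x′_t‖₂²)^{1/2}, where S_T(γ) := ∑_{k=0}^{T-1} γ^k.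 -/
/-!
The potential gap `e_t = ‖u_t - u'_t‖` obeys `e_t ≤ γ e_{t-1} + M_A ‖x_t - x'_t‖`: the leak
contributes `α`, and the reset term `θ_i σ(v_i - θ_i)` is coordinatewise `M_θ B₁`-Lipschitz.
Unrolling from `e_0 = 0` bounds `e` by `M_A` times the causal convolution of `‖x - x'‖` with
the kernel `γ^k`; the outputs add a factor `B₁`, and Young's inequality with
`∑_{k<T} γ^k = S_T(γ)` gives the `‖·‖_{2,2}` bound.
-/

open Finset

theorem abs_sub_le_of_abs_deriv_le {f : ℝ → ℝ} {C : ℝ} (hf : Differentiable ℝ f)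
    (hC : ∀ x, |deriv f x| ≤ C) (a b : ℝ) : |f a - f b| ≤ C * |a - b| := by
  simpa using convex_univ.norm_image_sub_le_of_norm_deriv_le (fun y _ => hf y)
    (fun y _ => by simpa using hC y) (Set.mem_univ b) (Set.mem_univ a)

theorem EuclideanSpace.norm_sub_le_of_coord_lipschitz {ι : Type*} [Fintype ι]
    (φ : ι → ℝ → ℝ) {K : ℝ} (hK : 0 ≤ K) (hφ : ∀ i a b, |φ i a - φ i b| ≤ K * |a - b|)
    (v w : EuclideanSpace ℝ ι) :
    ‖(WithLp.equiv 2 (ι → ℝ)).symm (fun i => φ i (v i))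
      - (WithLp.equiv 2 (ι → ℝ)).symm (fun i => φ i (w i))‖ ≤ K * ‖v - w‖ := by
  refine le_of_sq_le_sq ?_ (by positivity)
  simp only [mul_pow, EuclideanSpace.real_norm_sq_eq, mul_sum, PiLp.sub_apply,
    WithLp.equiv_symm_apply]
  gcongr with i
  rw [← sq_abs, ← sq_abs (v i - w i), ← mul_pow]
  gcongr
  exact hφ i _ _

theorem sum_comp_le_sum_range {κ : ℕ → ℝ} (hκ : ∀ k, 0 ≤ κ k) {s : Finset ℕ} {f : ℕ → ℕ}
    {T : ℕ} (hf : Set.InjOn f s) (hfs : ∀ i ∈ s, f i < T) :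
    ∑ i ∈ s, κ (f i) ≤ ∑ k ∈ range T, κ k := by
  rw [← sum_image hf]
  refine sum_le_sum_of_subset_of_nonneg ?_ fun k _ _ => hκ k
  simpa [subset_iff] using hfs

theorem le_sum_geom_conv_of_le_mul_add {γ C : ℝ} (hγ : 0 ≤ γ) {e w : ℕ → ℝ} {T : ℕ}
    (h0 : e 0 ≤ 0) (hstep : ∀ t < T, e (t + 1) ≤ γ * e t + C * w (t + 1)) :
    ∀ t ≤ T, e t ≤ C * ∑ s ∈ Icc 1 t, γ ^ (t - s) * w s := by
  intro t
  induction t with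
  | zero => simpa using h0
  | succ n ih =>
    intro hn
    have hshift : ∑ s ∈ Icc 1 (n + 1), γ ^ (n + 1 - s) * w s
        = γ * ∑ s ∈ Icc 1 n, γ ^ (n - s) * w s + w (n + 1) := by
      rw [sum_Icc_succ_top (by omega), Nat.sub_self, pow_zero, one_mul, mul_sum]
      congr 1
      refine sum_congr rfl fun s hs => ?_
      rw [← mul_assoc, ← pow_succ', Nat.sub_add_comm (mem_Icc.mp hs).2]
    calc e (n + 1) ≤ γ * e n + C * w (n + 1) := hstep n hn
      _ ≤ γ * (C * ∑ s ∈ Icc 1 n, γ ^ (n - s) * w s) + C * w (n + 1) := by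
        gcongr; exact ih (by omega)
      _ = C * ∑ s ∈ Icc 1 (n + 1), γ ^ (n + 1 - s) * w s := by rw [hshift]; ring

/-- Young's inequality `‖κ * w‖₂ ≤ ‖κ‖₁ ‖w‖₂` for a causal convolution on `{1, …, T}`. -/
theorem sum_sq_conv_le {κ : ℕ → ℝ} (hκ : ∀ k, 0 ≤ κ k) (w : ℕ → ℝ) (T : ℕ) :
    ∑ t ∈ Icc 1 T, (∑ s ∈ Icc 1 t, κ (t - s) * w s) ^ 2
      ≤ (∑ k ∈ range T, κ k) ^ 2 * ∑ t ∈ Icc 1 T, w t ^ 2 := by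
  set S := ∑ k ∈ range T, κ k
  calc ∑ t ∈ Icc 1 T, (∑ s ∈ Icc 1 t, κ (t - s) * w s) ^ 2
      ≤ ∑ t ∈ Icc 1 T, S * ∑ s ∈ Icc 1 t, κ (t - s) * w s ^ 2 := by
        refine sum_le_sum fun t ht => ?_
        refine (sum_sq_le_sum_mul_sum_of_sq_le_mul _ (f := fun s => κ (t - s))
          (g := fun s => κ (t - s) * w s ^ 2) (fun s _ => hκ _)
          (fun s _ => mul_nonneg (hκ _) (sq_nonneg _)) fun s _ => le_of_eq (by ring)).trans ?_
        gcongr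
        · exact sum_nonneg fun s _ => mul_nonneg (hκ _) (sq_nonneg _)
        · refine sum_comp_le_sum_range hκ (fun a ha b hb h => ?_) fun s hs => ?_
          · simp only [coe_Icc, Set.mem_Icc] at ha hb; omega
          · simp only [mem_Icc] at hs ht; omega
    _ = S * ∑ s ∈ Icc 1 T, (∑ t ∈ Icc s T, κ (t - s)) * w s ^ 2 := by
        rw [← mul_sum]
        simp_rw [sum_mul]
        congr 1
        exact sum_comm' fun t s => by simp only [mem_Icc]; omega
    _ ≤ S * ∑ s ∈ Icc 1 T, S * w s ^ 2 := by
        have hS : 0 ≤ S := sum_nonneg fun k _ => hκ k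
        gcongr with s hs
        refine sum_comp_le_sum_range hκ (fun a ha b hb h => ?_) fun t ht => ?_
        · simp only [coe_Icc, Set.mem_Icc] at ha hb; omega
        · simp only [mem_Icc] at hs ht; omega
    _ = S ^ 2 * ∑ t ∈ Icc 1 T, w t ^ 2 := by rw [← mul_sum]; ring

theorem sqrt_sum_sq_le_of_abs_le_conv {κ w a : ℕ → ℝ} {C : ℝ} {T : ℕ} (hκ : ∀ k, 0 ≤ κ k)
    (hC : 0 ≤ C) (ha : ∀ t ∈ Icc 1 T, |a t| ≤ C * ∑ s ∈ Icc 1 t, κ (t - s) * w s) :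
    √(∑ t ∈ Icc 1 T, a t ^ 2)
      ≤ C * (∑ k ∈ range T, κ k) * √(∑ t ∈ Icc 1 T, w t ^ 2) := by
  have hS : 0 ≤ ∑ k ∈ range T, κ k := sum_nonneg fun k _ => hκ k
  rw [← Real.sqrt_sq (mul_nonneg hC hS), ← Real.sqrt_mul (sq_nonneg _)]
  refine Real.sqrt_le_sqrt ?_
  calc ∑ t ∈ Icc 1 T, a t ^ 2
      ≤ ∑ t ∈ Icc 1 T, (C * ∑ s ∈ Icc 1 t, κ (t - s) * w s) ^ 2 :=
        sum_le_sum fun t ht => sq_le_sq.mpr ((ha t ht).trans (le_abs_self _))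
    _ = C ^ 2 * ∑ t ∈ Icc 1 T, (∑ s ∈ Icc 1 t, κ (t - s) * w s) ^ 2 := by
        rw [mul_sum]; simp_rw [mul_pow]
    _ ≤ C ^ 2 * ((∑ k ∈ range T, κ k) ^ 2 * ∑ t ∈ Icc 1 T, w t ^ 2) := by
        gcongr; exact sum_sq_conv_le hκ w T
    _ = (C * ∑ k ∈ range T, κ k) ^ 2 * ∑ t ∈ Icc 1 T, w t ^ 2 := by ring

theorem norm_sub_lif_step_le {E ι : Type*} [NormedAddCommGroup E] [NormedSpace ℝ E] [Fintype ι]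
    {α Mθ B₁ MA : ℝ} (hα : 0 ≤ α) (hMθ : 0 ≤ Mθ) (hB₁ : 0 ≤ B₁)
    {A : E →L[ℝ] EuclideanSpace ℝ ι} (hA : ‖A‖ ≤ MA) (b : EuclideanSpace ℝ ι)
    {θ : EuclideanSpace ℝ ι} (hθ : ∀ i, |θ i| ≤ Mθ)
    {σ : ℝ → ℝ} (hσ : ∀ a c, |σ a - σ c| ≤ B₁ * |a - c|) (v v' : EuclideanSpace ℝ ι) (y y' : E) :
    ‖(α • v + A y + b - (WithLp.equiv 2 (ι → ℝ)).symm (fun i => θ i * σ (v i - θ i)))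
      - (α • v' + A y' + b - (WithLp.equiv 2 (ι → ℝ)).symm (fun i => θ i * σ (v' i - θ i)))‖
      ≤ (α + Mθ * B₁) * ‖v - v'‖ + MA * ‖y - y'‖ := by
  set R : EuclideanSpace ℝ ι → EuclideanSpace ℝ ι :=
    fun v => (WithLp.equiv 2 (ι → ℝ)).symm (fun i => θ i * σ (v i - θ i))
  have hR : ‖R v - R v'‖ ≤ Mθ * B₁ * ‖v - v'‖ :=
    EuclideanSpace.norm_sub_le_of_coord_lipschitz (fun i a => θ i * σ (a - θ i))
      (mul_nonneg hMθ hB₁) (fun i a c => by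
        rw [← mul_sub, abs_mul, mul_assoc]
        gcongr
        · exact hθ i
        · simpa using hσ (a - θ i) (c - θ i)) v v'
  have hA' : ‖A (y - y')‖ ≤ MA * ‖y - y'‖ := (A.le_opNorm _).trans (by gcongr)
  calc ‖(α • v + A y + b - R v) - (α • v' + A y' + b - R v')‖
      = ‖α • (v - v') + A (y - y') - (R v - R v')‖ := by
        rw [map_sub, smul_sub]; congr 1; abel
    _ ≤ ‖α • (v - v')‖ + ‖A (y - y')‖ + ‖R v - R v'‖ :=
        (norm_sub_le _ _).trans (by gcongr; exact norm_add_le _ _)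
    _ ≤ α * ‖v - v'‖ + MA * ‖y - y'‖ + Mθ * B₁ * ‖v - v'‖ := by
        rw [norm_smul, Real.norm_of_nonneg hα]; gcongr
    _ = (α + Mθ * B₁) * ‖v - v'‖ + MA * ‖y - y'‖ := by ring

theorem surrogate_lif_layer_lipschitz_general
    (dIn d T : ℕ) (hd : 1 ≤ d)
    (α MA Mθ B₁ : ℝ) (hα0 : 0 < α)
    (A : EuclideanSpace ℝ (Fin dIn) →L[ℝ] EuclideanSpace ℝ (Fin d))
    (hA : ‖A‖ ≤ MA)
    (b θ : EuclideanSpace ℝ (Fin d)) (hθ : ∀ i, |θ i| ≤ Mθ)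
    (σ : ℝ → ℝ) (hσ : Differentiable ℝ σ) (hB₁ : ∀ x, |deriv σ x| ≤ B₁)
    (x x' : ℕ → EuclideanSpace ℝ (Fin dIn))
    (u u' z z' : ℕ → EuclideanSpace ℝ (Fin d))
    (hu0 : u 0 = 0) (hu0' : u' 0 = 0)
    (hu : ∀ t, 1 ≤ t → t ≤ T →
      u t = α • u (t - 1) + A (x t) + b
        - (WithLp.equiv 2 (Fin d → ℝ)).symm (fun i => θ i * σ (u (t - 1) i - θ i)))
    (hu' : ∀ t, 1 ≤ t → t ≤ T →
      u' t = α • u' (t - 1) + A (x' t) + b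
        - (WithLp.equiv 2 (Fin d → ℝ)).symm (fun i => θ i * σ (u' (t - 1) i - θ i)))
    (hz : ∀ t, 1 ≤ t → t ≤ T →
      z t = (WithLp.equiv 2 (Fin d → ℝ)).symm (fun i => σ (u t i - θ i)))
    (hz' : ∀ t, 1 ≤ t → t ≤ T →
      z' t = (WithLp.equiv 2 (Fin d → ℝ)).symm (fun i => σ (u' t i - θ i))) :
    Real.sqrt (∑ t ∈ Finset.Icc 1 T, ‖z t - z' t‖ ^ 2)
      ≤ B₁ * MA * (∑ k ∈ Finset.range T, (α + Mθ * B₁) ^ k)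
        * Real.sqrt (∑ t ∈ Finset.Icc 1 T, ‖x t - x' t‖ ^ 2) := by
  have hB₁0 : 0 ≤ B₁ := (abs_nonneg _).trans (hB₁ 0)
  have hMθ0 : 0 ≤ Mθ := (abs_nonneg _).trans (hθ ⟨0, hd⟩)
  have hMA0 : 0 ≤ MA := (norm_nonneg A).trans hA
  have hσlip := abs_sub_le_of_abs_deriv_le hσ hB₁
  have hΔu : ∀ t ≤ T,
      ‖u t - u' t‖ ≤ MA * ∑ s ∈ Icc 1 t, (α + Mθ * B₁) ^ (t - s) * ‖x s - x' s‖ :=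
    le_sum_geom_conv_of_le_mul_add (by positivity) (by simp [hu0, hu0']) fun t ht => by
      rw [hu (t + 1) (by omega) ht, hu' (t + 1) (by omega) ht, Nat.add_sub_cancel]
      exact norm_sub_lif_step_le hα0.le hMθ0 hB₁0 hA b hθ hσlip _ _ _ _
  refine sqrt_sum_sq_le_of_abs_le_conv (fun k => by positivity) (mul_nonneg hB₁0 hMA0)
    fun t ht => ?_
  obtain ⟨ht1, htT⟩ := mem_Icc.mp ht
  rw [hz t ht1 htT, hz' t ht1 htT, abs_norm, mul_assoc]
  refine (EuclideanSpace.norm_sub_le_of_coord_lipschitz (fun i a => σ (a - θ i)) hB₁0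
    (fun i a c => by simpa using hσlip (a - θ i) (c - θ i)) _ _).trans ?_
  gcongr
  exact hΔu t htT

/-- A single surrogate-forward LIF layer, evolving as
`u_t = α u_{t-1} + A x_t + b - diag(θ)·σ(u_{t-1} - θ)`, `z_t = σ(u_t - θ)`
from `u_0 = 0`, is Lipschitz from input sequences to output sequences with
constant `B₁ M_A S_T(γ)` in the `‖·‖_{2,2}` sequence norm, where
`γ = α + M_θ B₁ < 1` and `S_T(γ) = ∑_{k=0}^{T-1} γ^k`. -/
theorem surrogate_lif_layer_lipschitz
    (dIn d T : ℕ) (hdIn : 1 ≤ dIn) (hd : 1 ≤ d) (hT : 1 ≤ T)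
    (α MA Mθ B₁ : ℝ) (hα0 : 0 < α) (hα1 : α < 1)
    (A : EuclideanSpace ℝ (Fin dIn) →L[ℝ] EuclideanSpace ℝ (Fin d))
    (hA : ‖A‖ ≤ MA)
    (b θ : EuclideanSpace ℝ (Fin d)) (hθ : ∀ i, |θ i| ≤ Mθ)
    (σ : ℝ → ℝ) (hσ : Differentiable ℝ σ) (hB₁ : ∀ x, |deriv σ x| ≤ B₁)
    (hγ : α + Mθ * B₁ < 1)
    (x x' : ℕ → EuclideanSpace ℝ (Fin dIn))
    (u u' z z' : ℕ → EuclideanSpace ℝ (Fin d))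
    (hu0 : u 0 = 0) (hu0' : u' 0 = 0)
    (hu : ∀ t, 1 ≤ t → t ≤ T →
      u t = α • u (t - 1) + A (x t) + b
        - (WithLp.equiv 2 (Fin d → ℝ)).symm (fun i => θ i * σ (u (t - 1) i - θ i)))
    (hu' : ∀ t, 1 ≤ t → t ≤ T →
      u' t = α • u' (t - 1) + A (x' t) + b
        - (WithLp.equiv 2 (Fin d → ℝ)).symm (fun i => θ i * σ (u' (t - 1) i - θ i)))
    (hz : ∀ t, 1 ≤ t → t ≤ T →
      z t = (WithLp.equiv 2 (Fin d → ℝ)).symm (fun i => σ (u t i - θ i)))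
    (hz' : ∀ t, 1 ≤ t → t ≤ T →
      z' t = (WithLp.equiv 2 (Fin d → ℝ)).symm (fun i => σ (u' t i - θ i))) :
    Real.sqrt (∑ t ∈ Finset.Icc 1 T, ‖z t - z' t‖ ^ 2)
      ≤ B₁ * MA * (∑ k ∈ Finset.range T, (α + Mθ * B₁) ^ k)
        * Real.sqrt (∑ t ∈ Finset.Icc 1 T, ‖x t - x' t‖ ^ 2) :=
  surrogate_lif_layer_lipschitz_general dIn d T hd α MA Mθ B₁ hα0 A hA b θ hθ σ hσ hB₁ x x' u u' z
    z' hu0 hu0' hu hu' hz hz'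
end

section
/- Let L : ℝ^p → ℝ be differentiable with β-Lipschitz gradient (β > 0), and let w, ε ∈ ℝ^p with ‖ε‖₂ ≤ ρ. Let 0 < η ≤ 1/(4β) and set w⁺ := w - η ∇L(w + ε). Then L(w⁺) ≤ L(w) - (η/2 - β η²) ‖∇L(w)‖₂² + (η/2 + β η²) β² ρ², and in particular L(w⁺) ≤ L(w) - (η/4) ‖∇L(w)‖₂² + (3η/4) β² ρ². -/
/-!
By the descent lemma, a gradient step of length `η` along `g = ∇L(w + ε)` decreases `L` by at
least `η ⟪∇L w, g⟫ - (β η² / 2) ‖g‖²`. Polarizing `⟪∇L w, g⟫` leaves a term `-(η / 2)(1 - β η) ‖g‖²`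
that can be dropped once `β η ≤ 1`, so
`L(w⁺) ≤ L w - (η / 2) ‖∇L w‖² + (η / 2) ‖g - ∇L w‖²`, and `‖g - ∇L w‖ ≤ β ρ` by smoothness.
-/

open InnerProductSpace Set

variable {E : Type*} [NormedAddCommGroup E] [InnerProductSpace ℝ E] [CompleteSpace E]
  {f : E → ℝ} {β : ℝ}

theorem le_add_inner_gradient_add_sq_of_gradient_lipschitz (hf : Differentiable ℝ f)
    (hβ : ∀ x y, ‖gradient f x - gradient f y‖ ≤ β * ‖x - y‖) (x y : E) :
    f y ≤ f x + ⟪gradient f x, y - x⟫_ℝ + β / 2 * ‖y - x‖ ^ 2 := by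
  set v := y - x
  let φ : ℝ → ℝ := fun t ↦ f (x + t • v) - t * ⟪gradient f x, v⟫_ℝ - β / 2 * t ^ 2 * ‖v‖ ^ 2
  have hφ : ∀ t, HasDerivAt φ
      (⟪gradient f (x + t • v) - gradient f x, v⟫_ℝ - β * t * ‖v‖ ^ 2) t := by
    intro t
    have hline : HasDerivAt (fun t : ℝ ↦ x + t • v) v t := by
      simpa using ((hasDerivAt_id t).smul_const v).const_add x
    have hfline := (hf (x + t • v)).hasGradientAt.hasFDerivAt.comp_hasDerivAt t hline
    rw [toDual_apply_apply] at hfline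
    exact ((hfline.sub ((hasDerivAt_id t).mul_const ⟪gradient f x, v⟫_ℝ)).sub
      (((hasDerivAt_pow 2 t).const_mul (β / 2)).mul_const (‖v‖ ^ 2))).congr_deriv
      (by rw [inner_sub_left]; ring)
  have hφ_nonpos : ∀ t ∈ interior (Ici (0 : ℝ)), deriv φ t ≤ 0 := by
    intro t ht
    rw [interior_Ici, mem_Ioi] at ht
    rw [(hφ t).deriv, sub_nonpos]
    calc ⟪gradient f (x + t • v) - gradient f x, v⟫_ℝ
        ≤ ‖gradient f (x + t • v) - gradient f x‖ * ‖v‖ := real_inner_le_norm _ _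
      _ ≤ β * ‖t • v‖ * ‖v‖ := by
          gcongr
          simpa using hβ (x + t • v) x
      _ = β * t * ‖v‖ ^ 2 := by rw [norm_smul, Real.norm_of_nonneg ht.le]; ring
  have hφ_anti : AntitoneOn φ (Ici 0) :=
    antitoneOn_of_deriv_nonpos (convex_Ici 0)
      (fun t _ ↦ (hφ t).continuousAt.continuousWithinAt)
      (fun t _ ↦ (hφ t).differentiableAt.differentiableWithinAt) hφ_nonpos
  have h10 : φ 1 ≤ φ 0 := hφ_anti self_mem_Ici (mem_Ici.2 zero_le_one) zero_le_one
  simp only [φ, v, one_smul, zero_smul, add_zero, add_sub_cancel] at h10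
  linarith

theorem image_sub_smul_gradient_le (hf : Differentiable ℝ f)
    (hβ : ∀ x y, ‖gradient f x - gradient f y‖ ≤ β * ‖x - y‖) {η : ℝ} (hη : 0 ≤ η)
    (hβη : β * η ≤ 1) (w u : E) :
    f (w - η • gradient f u)
      ≤ f w - η / 2 * ‖gradient f w‖ ^ 2 + η / 2 * ‖gradient f u - gradient f w‖ ^ 2 := by
  set g := gradient f u
  set G := gradient f w
  have hdesc := le_add_inner_gradient_add_sq_of_gradient_lipschitz hf hβ w (w - η • g)
  rw [sub_sub_cancel_left, inner_neg_right, real_inner_smul_right, norm_neg, norm_smul,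
    Real.norm_of_nonneg hη] at hdesc
  have hpolar := norm_sub_sq_real g G
  rw [real_inner_comm] at hpolar
  nlinarith [mul_nonneg (mul_nonneg hη (sub_nonneg.2 hβη)) (sq_nonneg ‖g‖)]

theorem sam_descent_step_general
    (p : ℕ)
    (L : EuclideanSpace ℝ (Fin p) → ℝ) (β ρ η : ℝ) (hβ : 0 < β)
    (hdiff : Differentiable ℝ L)
    (hsmooth : ∀ v v', ‖gradient L v - gradient L v'‖ ≤ β * ‖v - v'‖)
    (hη0 : 0 < η) (hη : η ≤ 1 / (4 * β))
    (w ε : EuclideanSpace ℝ (Fin p)) (hε : ‖ε‖ ≤ ρ) :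
    L (w - η • gradient L (w + ε))
        ≤ L w - (η / 2 - β * η ^ 2) * ‖gradient L w‖ ^ 2
          + (η / 2 + β * η ^ 2) * β ^ 2 * ρ ^ 2 ∧
    L (w - η • gradient L (w + ε))
        ≤ L w - (η / 4) * ‖gradient L w‖ ^ 2
          + (3 * η / 4) * β ^ 2 * ρ ^ 2 := by
  have hβη : β * η ≤ 1 / 4 := by
    rw [le_div_iff₀ (by positivity)] at hη
    linarith
  have hstep := image_sub_smul_gradient_le hdiff hsmooth hη0.le (by linarith) w (w + ε)
  have hgap : ‖gradient L (w + ε) - gradient L w‖ ^ 2 ≤ β ^ 2 * ρ ^ 2 := by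
    rw [← mul_pow]
    gcongr
    calc ‖gradient L (w + ε) - gradient L w‖ ≤ β * ‖ε‖ := by simpa using hsmooth (w + ε) w
      _ ≤ β * ρ := by gcongr
  have hβη2 : 0 ≤ β * η ^ 2 := by positivity
  constructor <;> nlinarith [sq_nonneg ‖gradient L w‖, sq_nonneg (β * ρ)]

/-- One SAM-style descent step: if `L` is differentiable
with `β`-Lipschitz gradient (`β > 0`), `‖ε‖ ≤ ρ`, `0 < η ≤ 1/(4β)`, and
`w⁺ = w - η ∇L(w + ε)`, then
`L(w⁺) ≤ L(w) - (η/2 - βη²)‖∇L(w)‖² + (η/2 + βη²)β²ρ²`, and in particular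
`L(w⁺) ≤ L(w) - (η/4)‖∇L(w)‖² + (3η/4)β²ρ²`. -/
theorem sam_descent_step
    (p : ℕ) (hp : 1 ≤ p)
    (L : EuclideanSpace ℝ (Fin p) → ℝ) (β ρ η : ℝ) (hβ : 0 < β) (hρ : 0 ≤ ρ)
    (hdiff : Differentiable ℝ L)
    (hsmooth : ∀ v v', ‖gradient L v - gradient L v'‖ ≤ β * ‖v - v'‖)
    (hη0 : 0 < η) (hη : η ≤ 1 / (4 * β))
    (w ε : EuclideanSpace ℝ (Fin p)) (hε : ‖ε‖ ≤ ρ) :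
    L (w - η • gradient L (w + ε))
        ≤ L w - (η / 2 - β * η ^ 2) * ‖gradient L w‖ ^ 2
          + (η / 2 + β * η ^ 2) * β ^ 2 * ρ ^ 2 ∧
    L (w - η • gradient L (w + ε))
        ≤ L w - (η / 4) * ‖gradient L w‖ ^ 2
          + (3 * η / 4) * β ^ 2 * ρ ^ 2 :=
  sam_descent_step_general p L β ρ η hβ hdiff hsmooth hη0 hη w ε hε
end

section
/- Let L : ℝ^p → ℝ be differentiable with β-Lipschitz gradient (β > 0) and bounded below by L*. Let 0 < η ≤ 1/(4β), ρ ≥ 0, and let (w_k)_{k=0}^{K} be generated by w_{k+1} = w_k - η ∇L(w_k + ε_k) for arbitrary perturbations ε_k ∈ ℝ^p with ‖ε_k‖₂ ≤ ρ. Then (1/K) ∑_{k=0}^{K-1} ‖∇L(w_k)‖₂² ≤ 4 (L(w_0) - L*)/(η K) + 3 β² ρ². -/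
/-!
By the descent lemma, a step `x ↦ x - η G` with an inexact gradient `G` changes `L` by at most
`-η ⟪∇L x, G⟫ + βη²/2 ‖G‖²`. Expanding `⟪∇L x, G⟫` by polarization, the `‖G‖²` terms cancel
as soon as `βη ≤ 1`, so each step decreases `L` by at least `η/2 ‖∇L x‖² - η/2 ‖G - ∇L x‖²`.
For `G = ∇L (x + ε)` the error is at most `βρ` by smoothness, and telescoping over `K` steps
against `L ≥ L*` bounds the average of `‖∇L w_k‖²` by `2 (L w₀ - L*)/(ηK) + β²ρ²`.
-/

open Finset Set
open scoped RealInnerProductSpace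

section Smooth

variable {E : Type*} [NormedAddCommGroup E] [InnerProductSpace ℝ E] [CompleteSpace E]
  {L : E → ℝ} {β : ℝ}

theorem le_add_inner_gradient_add_sq (hdiff : Differentiable ℝ L)
    (hsmooth : ∀ v v', ‖gradient L v - gradient L v'‖ ≤ β * ‖v - v'‖) (x y : E) :
    L y ≤ L x + ⟪gradient L x, y - x⟫ + β / 2 * ‖y - x‖ ^ 2 := by
  set v := y - x
  set φ : ℝ → ℝ := fun t => L (x + t • v) - t * ⟪gradient L x, v⟫ - β / 2 * t ^ 2 * ‖v‖ ^ 2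
  set φ' : ℝ → ℝ := fun t => ⟪gradient L (x + t • v) - gradient L x, v⟫ - β * t * ‖v‖ ^ 2
  have hφ' (t : ℝ) : HasDerivAt φ (φ' t) t := by
    have hline : HasDerivAt (fun t : ℝ => x + t • v) v t := by
      simpa using ((hasDerivAt_id t).smul_const v).const_add x
    have hL : HasDerivAt (fun t : ℝ => L (x + t • v)) ⟪gradient L (x + t • v), v⟫ t := by
      rw [inner_gradient_left]
      exact (hdiff _).hasFDerivAt.comp_hasDerivAt t hline
    refine ((hL.sub ((hasDerivAt_id t).mul_const ⟪gradient L x, v⟫)).sub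
      (((hasDerivAt_pow 2 t).const_mul (β / 2)).mul_const (‖v‖ ^ 2))).congr_deriv ?_
    simp only [φ', inner_sub_left, Nat.cast_ofNat]
    ring
  have hφ'_nonpos (t : ℝ) (ht : 0 ≤ t) : φ' t ≤ 0 := by
    simp only [φ']
    have hgrad : ‖gradient L (x + t • v) - gradient L x‖ ≤ β * (t * ‖v‖) := by
      simpa [norm_smul, abs_of_nonneg ht] using hsmooth (x + t • v) x
    nlinarith [real_inner_le_norm (gradient L (x + t • v) - gradient L x) v,
      mul_le_mul_of_nonneg_right hgrad (norm_nonneg v)]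
  have hanti : AntitoneOn φ (Ici 0) :=
    antitoneOn_of_hasDerivWithinAt_nonpos (convex_Ici 0)
      (fun t _ => (hφ' t).continuousAt.continuousWithinAt) (fun t _ => (hφ' t).hasDerivWithinAt)
      (fun t ht => hφ'_nonpos t (interior_subset ht))
  have hφ01 := hanti self_mem_Ici (mem_Ici.2 zero_le_one) zero_le_one
  simp only [φ, v, zero_smul, add_zero, one_smul, add_sub_cancel] at hφ01
  linarith

theorem le_sub_of_inexact_gradient_step (hdiff : Differentiable ℝ L)
    (hsmooth : ∀ v v', ‖gradient L v - gradient L v'‖ ≤ β * ‖v - v'‖) {η : ℝ} (hη : 0 ≤ η)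
    (hβη : β * η ≤ 1) (x G : E) :
    L (x - η • G) ≤ L x - η / 2 * ‖gradient L x‖ ^ 2 + η / 2 * ‖G - gradient L x‖ ^ 2 := by
  have hdesc := le_add_inner_gradient_add_sq hdiff hsmooth x (x - η • G)
  rw [sub_sub_cancel_left, inner_neg_right, real_inner_smul_right, real_inner_comm, norm_neg,
    norm_smul, Real.norm_eq_abs, abs_of_nonneg hη] at hdesc
  nlinarith [norm_sub_sq_real G (gradient L x),
    mul_nonneg (mul_nonneg hη (sq_nonneg ‖G‖)) (sub_nonneg.2 hβη)]

theorem sum_sq_norm_gradient_le_of_inexact_gradient_descent (hdiff : Differentiable ℝ L)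
    (hsmooth : ∀ v v', ‖gradient L v - gradient L v'‖ ≤ β * ‖v - v'‖) {η : ℝ} (hη : 0 ≤ η)
    (hβη : β * η ≤ 1) (w G : ℕ → E) (hupdate : ∀ k, w (k + 1) = w k - η • G k) (K : ℕ) :
    η / 2 * ∑ k ∈ range K, ‖gradient L (w k)‖ ^ 2
      ≤ L (w 0) - L (w K) + η / 2 * ∑ k ∈ range K, ‖G k - gradient L (w k)‖ ^ 2 := by
  have hstep (k : ℕ) : η / 2 * ‖gradient L (w k)‖ ^ 2
      ≤ L (w k) - L (w (k + 1)) + η / 2 * ‖G k - gradient L (w k)‖ ^ 2 := by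
    have hinexact := le_sub_of_inexact_gradient_step hdiff hsmooth hη hβη (w k) (G k)
    rw [← hupdate k] at hinexact
    linarith
  calc η / 2 * ∑ k ∈ range K, ‖gradient L (w k)‖ ^ 2
      = ∑ k ∈ range K, η / 2 * ‖gradient L (w k)‖ ^ 2 := mul_sum _ _ _
    _ ≤ ∑ k ∈ range K, (L (w k) - L (w (k + 1)) + η / 2 * ‖G k - gradient L (w k)‖ ^ 2) :=
      sum_le_sum fun k _ => hstep k
    _ = _ := by rw [sum_add_distrib, sum_range_sub', mul_sum]

theorem sum_sq_norm_gradient_le_of_perturbed_gradient_descent (hdiff : Differentiable ℝ L)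
    (hsmooth : ∀ v v', ‖gradient L v - gradient L v'‖ ≤ β * ‖v - v'‖) (hβ : 0 ≤ β) {η ρ : ℝ}
    (hη : 0 ≤ η) (hβη : β * η ≤ 1) (w ε : ℕ → E) (hε : ∀ k, ‖ε k‖ ≤ ρ)
    (hupdate : ∀ k, w (k + 1) = w k - η • gradient L (w k + ε k)) (K : ℕ) :
    η / 2 * ∑ k ∈ range K, ‖gradient L (w k)‖ ^ 2
      ≤ L (w 0) - L (w K) + η / 2 * (K * (β * ρ) ^ 2) := by
  have hperturb (k : ℕ) : ‖gradient L (w k + ε k) - gradient L (w k)‖ ^ 2 ≤ (β * ρ) ^ 2 := by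
    refine pow_le_pow_left₀ (norm_nonneg _) ?_ 2
    calc ‖gradient L (w k + ε k) - gradient L (w k)‖ ≤ β * ‖w k + ε k - w k‖ := hsmooth _ _
      _ ≤ β * ρ := by rw [add_sub_cancel_left]; exact mul_le_mul_of_nonneg_left (hε k) hβ
  have herror : ∑ k ∈ range K, ‖gradient L (w k + ε k) - gradient L (w k)‖ ^ 2
      ≤ K * (β * ρ) ^ 2 :=
    (sum_le_sum fun k _ => hperturb k).trans_eq (by rw [sum_const, card_range, nsmul_eq_mul])
  have hdescent :=
    sum_sq_norm_gradient_le_of_inexact_gradient_descent hdiff hsmooth hη hβη w _ hupdate K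
  linarith [mul_le_mul_of_nonneg_left herror (by positivity : (0 : ℝ) ≤ η / 2)]

end Smooth

theorem sast_deterministic_convergence_general
    (p : ℕ)
    (L : EuclideanSpace ℝ (Fin p) → ℝ) (β ρ η Lstar : ℝ)
    (hβ : 0 < β)
    (hdiff : Differentiable ℝ L)
    (hsmooth : ∀ v v', ‖gradient L v - gradient L v'‖ ≤ β * ‖v - v'‖)
    (hbdd : ∀ v, Lstar ≤ L v)
    (hη0 : 0 < η) (hη : η ≤ 1 / (4 * β))
    (w ε : ℕ → EuclideanSpace ℝ (Fin p))
    (hε : ∀ k, ‖ε k‖ ≤ ρ)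
    (hupdate : ∀ k, w (k + 1) = w k - η • gradient L (w k + ε k)) :
    ∀ K : ℕ, 1 ≤ K →
      (1 / (K : ℝ)) * ∑ k ∈ Finset.range K, ‖gradient L (w k)‖ ^ 2
        ≤ 4 * (L (w 0) - Lstar) / (η * K) + 3 * β ^ 2 * ρ ^ 2 := by
  intro K hK
  have hK0 : (0 : ℝ) < K := by exact_mod_cast hK
  have hβη : β * η ≤ 1 := by
    rw [le_div_iff₀ (by positivity)] at hη
    linarith
  have hdescent := sum_sq_norm_gradient_le_of_perturbed_gradient_descent hdiff hsmooth hβ.le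
    hη0.le hβη w ε hε hupdate K
  set S := ∑ k ∈ range K, ‖gradient L (w k)‖ ^ 2
  set D := L (w 0) - Lstar
  have hD : 0 ≤ D := sub_nonneg.2 (hbdd _)
  have hS : η * S ≤ 2 * D + η * K * (β * ρ) ^ 2 := by linarith [hbdd (w K)]
  calc 1 / (K : ℝ) * S = η * S / (η * K) := by field_simp
    _ ≤ (2 * D + η * K * (β * ρ) ^ 2) / (η * K) := by gcongr
    _ = 2 * D / (η * K) + β ^ 2 * ρ ^ 2 := by field_simp
    _ ≤ 4 * D / (η * K) + 3 * β ^ 2 * ρ ^ 2 := by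
      gcongr
      · linarith
      · nlinarith [sq_nonneg (β * ρ)]

/-- Deterministic convergence of perturbed gradient descent
(zero-noise SAST): if `L` is differentiable with `β`-Lipschitz gradient
(`β > 0`), bounded below by `L*`, `0 < η ≤ 1/(4β)`, and
`w_{k+1} = w_k - η ∇L(w_k + ε_k)` with `‖ε_k‖ ≤ ρ`, then for every `K ≥ 1`,
`(1/K) ∑_{k<K} ‖∇L(w_k)‖² ≤ 4(L(w_0) - L*)/(ηK) + 3β²ρ²`. -/
theorem sast_deterministic_convergence
    (p : ℕ) (hp : 1 ≤ p)
    (L : EuclideanSpace ℝ (Fin p) → ℝ) (β ρ η Lstar : ℝ)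
    (hβ : 0 < β) (hρ : 0 ≤ ρ)
    (hdiff : Differentiable ℝ L)
    (hsmooth : ∀ v v', ‖gradient L v - gradient L v'‖ ≤ β * ‖v - v'‖)
    (hbdd : ∀ v, Lstar ≤ L v)
    (hη0 : 0 < η) (hη : η ≤ 1 / (4 * β))
    (w ε : ℕ → EuclideanSpace ℝ (Fin p))
    (hε : ∀ k, ‖ε k‖ ≤ ρ)
    (hupdate : ∀ k, w (k + 1) = w k - η • gradient L (w k + ε k)) :
    ∀ K : ℕ, 1 ≤ K →
      (1 / (K : ℝ)) * ∑ k ∈ Finset.range K, ‖gradient L (w k)‖ ^ 2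
        ≤ 4 * (L (w 0) - Lstar) / (η * K) + 3 * β ^ 2 * ρ ^ 2 :=
  sast_deterministic_convergence_general p L β ρ η Lstar hβ hdiff hsmooth hbdd hη0 hη w ε hε hupdate
end
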